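/- Let G = {M ∈ ℝ^{2c×2c} : Mᵀ J M = J}, where J is the 2c×2c block matrix with c×c blocks [[0, I],[I, 0]]. Then every element of G can be factored as (1/2)·[[U+V, U−V],[U−V, U+V]] · [[I, M],[0, I]] · [[A, 0],[0, (Aᵀ)^{−1}]], where U, V ∈ O(c), A is an invertible c×c real matrix, and M is an antisymmetric c×c real matrix (Mᵀ = −M). -/
import Mathlib


open Matrix

/-- The block matrix `[[0, I], [I, 0]]`. -/
def Jmat (c : ℕ) : Matrix (Fin c ⊕ Fin c) (Fin c ⊕ Fin c) ℝ :=
  Matrix.fromBlocks 0 1 1 0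

private lemma aux9 (c : ℕ) (P Q R S : Matrix (Fin c) (Fin c) ℝ)
    (h11 : Rᵀ * P + Pᵀ * R = 0) (h12 : Rᵀ * Q + Pᵀ * S = 1)
    (g11 : Q * Pᵀ + P * Qᵀ = 0) (g12 : Q * Rᵀ + P * Sᵀ = 1)
    (g21 : S * Pᵀ + R * Qᵀ = 1) (g22 : S * Rᵀ + R * Sᵀ = 0)
    (hMinj : ∀ w : Fin c ⊕ Fin c → ℝ, (fromBlocks P Q R S) *ᵥ w = 0 → w = 0) :
    ∃ (U V A N : Matrix (Fin c) (Fin c) ℝ),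
      U * Uᵀ = 1 ∧ V * Vᵀ = 1 ∧ IsUnit A ∧ Nᵀ = -N ∧
        fromBlocks P Q R S =
          (((1 : ℝ) / 2) • Matrix.fromBlocks (U + V) (U - V) (U - V) (U + V)) *
            Matrix.fromBlocks 1 N 0 1 *
            Matrix.fromBlocks A 0 0 (Aᵀ)⁻¹ := by
  classical
  -- Gram matrices of P-R and P+R agree
  have hGram0 : (P - R)ᵀ * (P - R) = (P + R)ᵀ * (P + R) := by
    have e1 : (Pᵀ - Rᵀ) * (P - R) =
        (Pᵀ + Rᵀ) * (P + R) - ((Rᵀ * P + Pᵀ * R) + (Rᵀ * P + Pᵀ * R)) := by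
      noncomm_ring
    rw [transpose_sub, transpose_add, e1, h11, add_zero, sub_zero]
  -- kernel of P + R is trivial
  have hker : ∀ v : Fin c → ℝ, (P + R) *ᵥ v = 0 → v = 0 := by
    intro v hv
    have h1 : ((P + R)ᵀ * (P + R)) *ᵥ v = 0 := by
      rw [← mulVec_mulVec, hv, mulVec_zero]
    have h2 : ((P - R)ᵀ * (P - R)) *ᵥ v = 0 := by rw [hGram0]; exact h1
    have h3 : (P - R) *ᵥ v = 0 := by
      have h4 : ((P - R) *ᵥ v) ⬝ᵥ ((P - R) *ᵥ v) = 0 := by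
        calc ((P - R) *ᵥ v) ⬝ᵥ ((P - R) *ᵥ v)
            = (v ᵥ* (P - R)ᵀ) ⬝ᵥ ((P - R) *ᵥ v) := by rw [vecMul_transpose]
          _ = v ⬝ᵥ ((P - R)ᵀ *ᵥ ((P - R) *ᵥ v)) := (dotProduct_mulVec _ _ _).symm
          _ = v ⬝ᵥ (((P - R)ᵀ * (P - R)) *ᵥ v) := by rw [mulVec_mulVec]
          _ = 0 := by rw [h2, dotProduct_zero]
      exact dotProduct_self_eq_zero.mp h4
    have hadd : P *ᵥ v + R *ᵥ v = 0 := by rwa [add_mulVec] at hv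
    have hsub : P *ᵥ v - R *ᵥ v = 0 := by rwa [sub_mulVec] at h3
    have hP : P *ᵥ v = 0 := by
      have h5 : (P *ᵥ v) + (P *ᵥ v) = 0 := by
        calc (P *ᵥ v) + (P *ᵥ v)
            = (P *ᵥ v + R *ᵥ v) + (P *ᵥ v - R *ᵥ v) := by abel
          _ = 0 := by rw [hadd, hsub, add_zero]
      funext i
      have := congrFun h5 i
      simp only [Pi.add_apply, Pi.zero_apply] at this
      have : (2 : ℝ) * (P *ᵥ v) i = 0 := by linarith
      simpa using this
    have hR : R *ᵥ v = 0 := by rwa [hP, zero_add] at hadd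
    have hbig : (fromBlocks P Q R S) *ᵥ (Sum.elim v 0) = 0 := by
      funext i
      cases i with
      | inl i => simp [fromBlocks_mulVec, hP, hR]
      | inr i => simp [fromBlocks_mulVec, hP, hR]
    have h6 := hMinj _ hbig
    funext i
    have := congrFun h6 (Sum.inl i)
    simpa using this
  set A : Matrix (Fin c) (Fin c) ℝ := P + R with hA
  have hdetne : A.det ≠ 0 := by
    intro h0
    obtain ⟨v, hv0, hv⟩ := Matrix.exists_mulVec_eq_zero_iff.mpr h0
    exact hv0 (hker v hv)
  have hdetu : IsUnit A.det := isUnit_iff_ne_zero.mpr hdetne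
  have hAunit : IsUnit A := (Matrix.isUnit_iff_isUnit_det A).mpr hdetu
  have hiA : A⁻¹ * A = 1 := Matrix.nonsing_inv_mul A hdetu
  have hAi : A * A⁻¹ = 1 := Matrix.mul_nonsing_inv A hdetu
  have hdetuT : IsUnit (Aᵀ).det := by rwa [Matrix.det_transpose]
  have hAAt : Aᵀ * (Aᵀ)⁻¹ = 1 := Matrix.mul_nonsing_inv _ hdetuT
  have hAtA : (Aᵀ)⁻¹ * Aᵀ = 1 := Matrix.nonsing_inv_mul _ hdetuT
  set V : Matrix (Fin c) (Fin c) ℝ := (P - R) * A⁻¹ with hV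
  set N : Matrix (Fin c) (Fin c) ℝ := (Q + S) * Aᵀ - 1 with hN
  -- V is orthogonal
  have hVtV : Vᵀ * V = 1 := by
    rw [hV, transpose_mul, transpose_nonsing_inv]
    calc (Aᵀ)⁻¹ * (P - R)ᵀ * ((P - R) * A⁻¹)
        = (Aᵀ)⁻¹ * (((P - R)ᵀ * (P - R)) * A⁻¹) := by simp only [Matrix.mul_assoc]
      _ = (Aᵀ)⁻¹ * ((Aᵀ * A) * A⁻¹) := by rw [hGram0]
      _ = 1 := by rw [Matrix.mul_assoc Aᵀ, hAi, mul_one, hAtA]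
  have hVVt : V * Vᵀ = 1 := mul_eq_one_comm.mp hVtV
  -- N is antisymmetric
  have hNskew : Nᵀ = -N := by
    have h2 : N + Nᵀ = 0 := by
      rw [hN, hA]
      simp only [transpose_sub, transpose_mul, transpose_add, transpose_one,
        transpose_transpose]
      have e2 : ((Q + S) * (Pᵀ + Rᵀ) - 1) + ((P + R) * (Qᵀ + Sᵀ) - 1) =
          (Q * Pᵀ + P * Qᵀ) + (S * Rᵀ + R * Sᵀ) +
            ((Q * Rᵀ + P * Sᵀ) + (S * Pᵀ + R * Qᵀ)) - (1 + 1) := by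
        noncomm_ring
      rw [e2, g11, g22, g12, g21]
      abel
    exact eq_neg_of_add_eq_zero_right h2
  -- key identity
  have claim0 : (P - R)ᵀ * ((Q - S) * Aᵀ) = Aᵀ * (N - 1) := by
    have h1 : Pᵀ * S + Rᵀ * Q = 1 := by rw [add_comm]; exact h12
    rw [hN, hA]
    have expand : (P - R)ᵀ * ((Q - S) * (P + R)ᵀ) =
        (P + R)ᵀ * ((Q + S) * (P + R)ᵀ - 1 - 1) +
          (1 - (Pᵀ * S + Rᵀ * Q)) * ((P + R)ᵀ + (P + R)ᵀ) := by
      simp only [transpose_sub, transpose_add]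
      noncomm_ring
    rw [expand, h1, sub_self, zero_mul, add_zero]
  have dN : N + 1 = (Q + S) * Aᵀ := by rw [hN]; abel
  have dV : V * (N - 1) = (Q - S) * Aᵀ := by
    have step1 : Vᵀ * ((Q - S) * Aᵀ) = N - 1 := by
      rw [hV, transpose_mul, transpose_nonsing_inv, Matrix.mul_assoc, claim0,
        ← Matrix.mul_assoc, hAtA, one_mul]
    rw [← step1, ← Matrix.mul_assoc, hVVt, one_mul]
  -- block computations
  have b11 : (1 + V) * A = P + P := by
    rw [hV, add_mul, one_mul, Matrix.mul_assoc, hiA, mul_one, hA]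
    abel
  have b21 : (1 - V) * A = R + R := by
    rw [hV, sub_mul, one_mul, Matrix.mul_assoc, hiA, mul_one, hA]
    abel
  have c12 : (1 + V) * N + (1 - V) = (Q + Q) * Aᵀ := by
    have e : (1 + V) * N + (1 - V) = (N + 1) + V * (N - 1) := by noncomm_ring
    rw [e, dN, dV]
    noncomm_ring
  have c22 : (1 - V) * N + (1 + V) = (S + S) * Aᵀ := by
    have e : (1 - V) * N + (1 + V) = (N + 1) - V * (N - 1) := by noncomm_ring
    rw [e, dN, dV]
    noncomm_ring
  have b12 : ((1 + V) * N + (1 - V)) * (Aᵀ)⁻¹ = Q + Q := by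
    rw [c12, Matrix.mul_assoc, hAAt, mul_one]
  have b22 : ((1 - V) * N + (1 + V)) * (Aᵀ)⁻¹ = S + S := by
    rw [c22, Matrix.mul_assoc, hAAt, mul_one]
  have hhalf : ∀ X : Matrix (Fin c) (Fin c) ℝ, ((1 : ℝ) / 2) • (X + X) = X := by
    intro X
    ext i j
    simp [Matrix.smul_apply, Matrix.add_apply]
    ring
  refine ⟨1, V, A, N, by simp, hVVt, hAunit, hNskew, ?_⟩
  rw [Matrix.smul_mul, Matrix.smul_mul, fromBlocks_multiply, fromBlocks_multiply]
  simp only [mul_one, mul_zero, one_mul, add_zero, zero_add]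
  rw [b11, b12, b21, b22, fromBlocks_smul, hhalf, hhalf, hhalf, hhalf]

theorem stmt9 (c : ℕ) (M : Matrix (Fin c ⊕ Fin c) (Fin c ⊕ Fin c) ℝ)
    (hM : Mᵀ * Jmat c * M = Jmat c) :
    ∃ (U V A N : Matrix (Fin c) (Fin c) ℝ),
      U * Uᵀ = 1 ∧ V * Vᵀ = 1 ∧ IsUnit A ∧ Nᵀ = -N ∧
        M = (((1 : ℝ) / 2) • Matrix.fromBlocks (U + V) (U - V) (U - V) (U + V)) *
              Matrix.fromBlocks 1 N 0 1 *
              Matrix.fromBlocks A 0 0 (Aᵀ)⁻¹ := by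
  classical
  obtain ⟨P, Q, R, S, hMb⟩ : ∃ P Q R S, M = fromBlocks P Q R S :=
    ⟨_, _, _, _, (fromBlocks_toBlocks M).symm⟩
  have hJJ : Jmat c * Jmat c = 1 := by
    simp [Jmat, fromBlocks_multiply, ← fromBlocks_one]
  have hleft : Jmat c * Mᵀ * Jmat c * M = 1 := by
    rw [mul_assoc (Jmat c) Mᵀ (Jmat c), mul_assoc, hM, hJJ]
  have hright : M * (Jmat c * Mᵀ * Jmat c) = 1 := mul_eq_one_comm.mp hleft
  have hMJMt : M * Jmat c * Mᵀ = Jmat c := by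
    have h3 : M * (Jmat c * Mᵀ * Jmat c) * Jmat c = Jmat c := by rw [hright, one_mul]
    calc M * Jmat c * Mᵀ = M * (Jmat c * Mᵀ * Jmat c) * Jmat c := by
          simp only [mul_assoc, hJJ, mul_one]
      _ = Jmat c := h3
  -- block relations from hM
  have e := hM
  rw [hMb] at e
  simp only [Jmat, fromBlocks_transpose, fromBlocks_multiply, mul_zero, zero_mul,
    mul_one, one_mul, add_zero, zero_add] at e
  have h11 : Rᵀ * P + Pᵀ * R = 0 := by simpa using congrArg Matrix.toBlocks₁₁ e
  have h12 : Rᵀ * Q + Pᵀ * S = 1 := by simpa using congrArg Matrix.toBlocks₁₂ e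
  -- block relations from hMJMt
  have e2 := hMJMt
  rw [hMb] at e2
  simp only [Jmat, fromBlocks_transpose, fromBlocks_multiply, mul_zero, zero_mul,
    mul_one, one_mul, add_zero, zero_add] at e2
  have g11 : Q * Pᵀ + P * Qᵀ = 0 := by simpa using congrArg Matrix.toBlocks₁₁ e2
  have g12 : Q * Rᵀ + P * Sᵀ = 1 := by simpa using congrArg Matrix.toBlocks₁₂ e2
  have g21 : S * Pᵀ + R * Qᵀ = 1 := by simpa using congrArg Matrix.toBlocks₂₁ e2
  have g22 : S * Rᵀ + R * Sᵀ = 0 := by simpa using congrArg Matrix.toBlocks₂₂ e2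
  have hMinj : ∀ w : Fin c ⊕ Fin c → ℝ, (fromBlocks P Q R S) *ᵥ w = 0 → w = 0 := by
    rw [← hMb]
    intro w hw
    have h4 : (Jmat c * Mᵀ * Jmat c) *ᵥ (M *ᵥ w) = w := by
      rw [mulVec_mulVec, hleft, one_mulVec]
    rw [hw, mulVec_zero] at h4
    exact h4.symm
  obtain ⟨U, V, A, N, hU, hV, hA, hN, hfac⟩ :=
    aux9 c P Q R S h11 h12 g11 g12 g21 g22 hMinj
  exact ⟨U, V, A, N, hU, hV, hA, hN, by rw [hMb]; exact hfac⟩
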